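/- arXiv:2308.01912 — 15 statements merged into one kernel-verified Lean document; each statement's English description precedes it below -/
import Mathlib

section
/- For every even positive integer p, the number T(p) of integer triangles with perimeter p equals the integer nearest to p²/48, i.e. T(p) = round(p²/48). -/
/-- `T p` is the number of integer triangles with perimeter `p`:
unordered triples of positive integers `a ≤ b ≤ c` with `a + b + c = p`
and `c < a + b`. -/
noncomputable def T (p : ℕ) : ℕ :=
  Nat.card {t : ℕ × ℕ × ℕ //
    0 < t.1 ∧ t.1 ≤ t.2.1 ∧ t.2.1 ≤ t.2.2 ∧ t.2.2 < t.1 + t.2.1 ∧ t.1 + t.2.1 + t.2.2 = p}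

/-!
Replacing the sides `a ≤ b ≤ c` of a triangle of perimeter `2m` by `m - c ≤ m - b ≤ m - a` turns
the triangle inequality `c < a + b` into positivity of `m - c`, so `T (2m)` counts the partitions
of `m` into three positive parts. Removing one from each part of a partition of `n + 3` whose
smallest part is at least two gives a partition of `n`, while those with smallest part one are
`1 + b + (n + 2 - b)` with `1 ≤ b ≤ (n + 2) / 2`. Hence the count grows by `m + 3` from `m` to
`m + 6`, which is also the growth of `⌊(m² + 6) / 12⌋ = round (m² / 12)`.
-/

open Finset

def triangles (p : ℕ) : Finset (ℕ × ℕ × ℕ) :=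
  (range (p + 1) ×ˢ range (p + 1) ×ˢ range (p + 1)).filter
    fun t => 0 < t.1 ∧ t.1 ≤ t.2.1 ∧ t.2.1 ≤ t.2.2 ∧ t.2.2 < t.1 + t.2.1 ∧ t.1 + t.2.1 + t.2.2 = p

def threePartitions (n : ℕ) : Finset (ℕ × ℕ × ℕ) :=
  (range (n + 1) ×ˢ range (n + 1) ×ˢ range (n + 1)).filter
    fun t => 0 < t.1 ∧ t.1 ≤ t.2.1 ∧ t.2.1 ≤ t.2.2 ∧ t.1 + t.2.1 + t.2.2 = n

theorem mem_triangles {p : ℕ} {t : ℕ × ℕ × ℕ} :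
    t ∈ triangles p ↔
      0 < t.1 ∧ t.1 ≤ t.2.1 ∧ t.2.1 ≤ t.2.2 ∧ t.2.2 < t.1 + t.2.1 ∧ t.1 + t.2.1 + t.2.2 = p := by
  simp only [triangles, mem_filter, mem_product, mem_range, and_iff_right_iff_imp]
  omega

theorem mem_threePartitions {n : ℕ} {t : ℕ × ℕ × ℕ} :
    t ∈ threePartitions n ↔ 0 < t.1 ∧ t.1 ≤ t.2.1 ∧ t.2.1 ≤ t.2.2 ∧ t.1 + t.2.1 + t.2.2 = n := by
  simp only [threePartitions, mem_filter, mem_product, mem_range, and_iff_right_iff_imp]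
  omega

theorem T_eq_card_triangles (p : ℕ) : T p = #(triangles p) :=
  Nat.subtype_card _ fun _ => mem_triangles

theorem card_triangles_two_mul (m : ℕ) : #(triangles (2 * m)) = #(threePartitions m) := by
  refine card_nbij' (fun t => (m - t.2.2, m - t.2.1, m - t.1))
    (fun t => (m - t.2.2, m - t.2.1, m - t.1)) ?_ ?_ ?_ ?_ <;>
  · rintro ⟨a, b, c⟩ h
    simp only [mem_coe, mem_triangles, mem_threePartitions, Prod.mk.injEq] at h ⊢
    omega

theorem card_filter_fst_eq_one_threePartitions (n : ℕ) :
    #({t ∈ threePartitions (n + 3) | t.1 = 1}) = (n + 2) / 2 := by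
  have h : {t ∈ threePartitions (n + 3) | t.1 = 1} =
      (Icc 1 ((n + 2) / 2)).image fun b => (1, b, n + 2 - b) := by
    ext ⟨a, b, c⟩
    simp only [mem_filter, mem_threePartitions, mem_image, mem_Icc, Prod.mk.injEq]
    constructor
    · rintro ⟨h, rfl⟩
      exact ⟨b, by omega, rfl, rfl, by omega⟩
    · rintro ⟨b, hb, rfl, rfl, rfl⟩
      omega
  rw [h, card_image_of_injective _ fun b b' h => (Prod.mk.inj (Prod.mk.inj h).2).1,
    Nat.card_Icc, Nat.add_sub_cancel]

theorem card_filter_fst_ne_one_threePartitions (n : ℕ) :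
    #({t ∈ threePartitions (n + 3) | t.1 ≠ 1}) = #(threePartitions n) := by
  refine card_nbij' (fun t => (t.1 - 1, t.2.1 - 1, t.2.2 - 1))
    (fun t => (t.1 + 1, t.2.1 + 1, t.2.2 + 1)) ?_ ?_ ?_ ?_ <;>
  · rintro ⟨a, b, c⟩ h
    simp only [mem_coe, mem_filter, mem_threePartitions, Prod.mk.injEq] at h ⊢
    omega

theorem card_threePartitions_add_three (n : ℕ) :
    #(threePartitions (n + 3)) = #(threePartitions n) + (n + 2) / 2 := by
  rw [← card_filter_add_card_filter_not (fun t => t.1 = 1),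
    card_filter_fst_eq_one_threePartitions, card_filter_fst_ne_one_threePartitions, add_comm]

theorem card_threePartitions (n : ℕ) : #(threePartitions n) = (n ^ 2 + 6) / 12 := by
  induction n using Nat.strong_induction_on with
  | _ n ih =>
    rcases lt_or_ge n 6 with hn | hn
    · interval_cases n <;> decide
    · obtain ⟨m, rfl⟩ := Nat.exists_eq_add_of_le' hn
      rw [card_threePartitions_add_three, card_threePartitions_add_three, ih m (by omega),
        show (m + 6) ^ 2 + 6 = m ^ 2 + 6 + 12 * (m + 3) by ring]
      omega

theorem integer_triangles_even_perimeter_general (p : ℕ) (heven : Even p) :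
    (T p : ℤ) = round ((p : ℚ) ^ 2 / 48) := by
  obtain ⟨m, rfl⟩ := heven
  have h : ((m + m : ℕ) : ℚ) ^ 2 / 48 + 1 / 2 = ((m ^ 2 + 6 : ℕ) : ℚ) / (12 : ℕ) := by
    push_cast
    ring
  rw [← two_mul, T_eq_card_triangles, card_triangles_two_mul, card_threePartitions, round_eq,
    two_mul, h, Rat.floor_natCast_div_natCast]
  norm_cast

theorem integer_triangles_even_perimeter (p : ℕ) (hp : 0 < p) (heven : Even p) :
    (T p : ℤ) = round ((p : ℚ) ^ 2 / 48) :=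
  integer_triangles_even_perimeter_general p heven
end

section
/- For every integer p ≥ 3, the number T(p) of integer triangles with perimeter p equals the number of ordered triples (x,y,z) of nonnegative integers satisfying 2x + 3y + 4z = p − 3. -/
theorem integer_triangles_eq_card_solutions (p : ℕ) (hp : 3 ≤ p) :
    T p = Nat.card {t : ℕ × ℕ × ℕ // 2 * t.1 + 3 * t.2.1 + 4 * t.2.2 = p - 3} := by
  refine Nat.card_congr ?_
  refine
    { toFun := fun t =>
        ⟨(t.1.2.1 - t.1.1, t.1.1 + t.1.2.1 - t.1.2.2 - 1, t.1.2.2 - t.1.2.1), ?_⟩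
      invFun := fun s =>
        ⟨(s.1.2.1 + s.1.2.2 + 1, s.1.1 + s.1.2.1 + s.1.2.2 + 1,
          s.1.1 + s.1.2.1 + 2 * s.1.2.2 + 1), ?_⟩
      left_inv := ?_
      right_inv := ?_ }
  · obtain ⟨⟨a, b, c⟩, h1, h2, h3, h4, h5⟩ := t
    simp only at h1 h2 h3 h4 h5
    dsimp only
    omega
  · obtain ⟨⟨x, y, z⟩, h⟩ := s
    simp only at h
    dsimp only
    omega
  · rintro ⟨⟨a, b, c⟩, h1, h2, h3, h4, h5⟩
    simp only at h1 h2 h3 h4 h5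
    ext
    · dsimp only; omega
    · dsimp only; omega
    · dsimp only; omega
  · rintro ⟨⟨x, y, z⟩, h⟩
    simp only at h
    ext
    · dsimp only; omega
    · dsimp only; omega
    · dsimp only; omega
end

section
/- For every positive integer n, the number of integer triangles with perimeter p = 12n is T(12n) = 3n². -/
open Finset

theorem card_filter_product_eq_sum {α β : Type*} (s : Finset α) (t : Finset β)
    (P : α × β → Prop) [DecidablePred P] :
    #{x ∈ s ×ˢ t | P x} = ∑ b ∈ t, #{a ∈ s | P (a, b)} := by
  simp only [card_filter]
  exact sum_product_right s t _

theorem T_eq_card_pairs (p : ℕ) :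
    T p = #{x ∈ range (p + 1) ×ˢ range (p + 1) |
      0 < x.1 ∧ x.1 ≤ x.2 ∧ x.1 + 2 * x.2 ≤ p ∧ p < 2 * (x.1 + x.2)} := by
  rw [T, ← Nat.card_eq_finsetCard]
  refine Nat.card_congr
    { toFun := fun t => ⟨(t.1.1, t.1.2.1), ?_⟩
      invFun := fun x => ⟨(x.1.1, x.1.2, p - x.1.1 - x.1.2), ?_⟩
      left_inv := ?_
      right_inv := fun x => rfl }
  · obtain ⟨⟨a, b, c⟩, h⟩ := t
    simp only [mem_filter, mem_product, mem_range] at h ⊢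
    omega
  · obtain ⟨⟨a, b⟩, h⟩ := x
    simp only [mem_filter, mem_product, mem_range] at h
    dsimp only
    omega
  · rintro ⟨⟨a, b, c⟩, h⟩
    ext <;> dsimp only at h ⊢
    omega

theorem card_triangles_with_middle_side (p b : ℕ) :
    #{a ∈ range (p + 1) | 0 < a ∧ a ≤ b ∧ a + 2 * b ≤ p ∧ p < 2 * (a + b)} =
      min b (p - 2 * b) + 1 - max 1 (p / 2 + 1 - b) := by
  rw [← Nat.card_Icc]
  congr 1
  ext a
  simp only [mem_filter, mem_range, mem_Icc]
  omega

theorem sum_range_two_mul_add_two (n : ℕ) : ∑ i ∈ range n, (2 * i + 2) = n * (n + 1) := by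
  induction n with
  | zero => rfl
  | succ n ih => rw [sum_range_succ, ih]; ring

theorem sum_card_triangles_with_middle_side_twelve_mul (n : ℕ) :
    ∑ b ∈ range (12 * n + 1), (min b (12 * n - 2 * b) + 1 - max 1 (12 * n / 2 + 1 - b)) =
      3 * n ^ 2 := by
  rw [show 12 * n + 1 = 3 * n + 1 + n + 2 * n + 6 * n by ring]
  calc _ = ∑ _i ∈ range (3 * n + 1), 0 + ∑ i ∈ range n, (2 * i + 2) +
        ∑ i ∈ range (2 * n), (2 * n - 1 - i) + ∑ _i ∈ range (6 * n), 0 := by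
        rw [sum_range_add, sum_range_add, sum_range_add]
        refine congrArg₂ (· + ·) (congrArg₂ (· + ·) (congrArg₂ (· + ·) ?_ ?_) ?_) ?_ <;>
          exact sum_congr rfl fun i hi => by rw [mem_range] at hi; omega
    _ = 3 * n ^ 2 := by
      rw [sum_const_zero, sum_const_zero, sum_range_two_mul_add_two,
        sum_range_reflect (fun i => i) (2 * n)]
      have := sum_range_id_mul_two (2 * n)
      rcases n with _ | n
      · simp
      · rw [show 2 * (n + 1) - 1 = 2 * n + 1 by omega] at this
        nlinarith

theorem integer_triangles_perimeter_12n_plus_0_general (n : ℕ) :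
    T (12 * n) = 3 * n ^ 2 := by
  rw [T_eq_card_pairs, card_filter_product_eq_sum]
  simp only [card_triangles_with_middle_side]
  exact sum_card_triangles_with_middle_side_twelve_mul n

theorem integer_triangles_perimeter_12n_plus_0 (n : ℕ) (hn : 0 < n) :
    T (12 * n) = 3 * n ^ 2 :=
  integer_triangles_perimeter_12n_plus_0_general n
end

section
/- For every positive integer n, the number of integer triangles with perimeter p = 12n + 1 is T(12n+1) = 3n² + 2n. -/
open Finset

def Ft (p : ℕ) : Finset (ℕ × ℕ × ℕ) :=
  ((range (p+1)) ×ˢ (range (p+1)) ×ˢ (range (p+1))).filter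
    (fun t => 0 < t.1 ∧ t.1 ≤ t.2.1 ∧ t.2.1 ≤ t.2.2 ∧ t.2.2 < t.1 + t.2.1 ∧ t.1 + t.2.1 + t.2.2 = p)

def Fp (p : ℕ) : Finset (ℕ × ℕ) :=
  ((range (p+1)) ×ˢ (range (p+1))).filter
    (fun q => p ≤ q.1 + q.1 + q.2 ∧ q.1 ≤ q.2 ∧ 2*q.2 < p ∧ q.1 + q.2 < p)

lemma triTA (p : ℕ) : T p = (Ft p).card := by
  rw [T, ← Set.ncard_coe_finset]
  rw [show ({t : ℕ × ℕ × ℕ //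
    0 < t.1 ∧ t.1 ≤ t.2.1 ∧ t.2.1 ≤ t.2.2 ∧ t.2.2 < t.1 + t.2.1 ∧ t.1 + t.2.1 + t.2.2 = p}) =
    ↥({t : ℕ × ℕ × ℕ |
    0 < t.1 ∧ t.1 ≤ t.2.1 ∧ t.2.1 ≤ t.2.2 ∧ t.2.2 < t.1 + t.2.1 ∧ t.1 + t.2.1 + t.2.2 = p}) from rfl]
  rw [Nat.card_coe_set_eq]
  congr 1
  ext ⟨a, b, c⟩
  simp [Ft, mem_filter, mem_product, mem_range]
  omega

lemma triTB (p : ℕ) : (Ft p).card = (Fp p).card := by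
  apply Finset.card_bij' (fun t _ => (t.2.1, t.2.2)) (fun q _ => (p - q.1 - q.2, q.1, q.2))
  · rintro ⟨a, b, c⟩ h
    simp [Ft, mem_filter, mem_product, mem_range] at h
    simp [Fp, mem_filter, mem_product, mem_range]
    omega
  · rintro ⟨b, c⟩ h
    simp [Fp, mem_filter, mem_product, mem_range] at h
    simp [Ft, mem_filter, mem_product, mem_range]
    omega
  · rintro ⟨a, b, c⟩ h
    simp [Ft, mem_filter, mem_product, mem_range] at h
    simp
    omega
  · rintro ⟨b, c⟩ h
    simp

lemma triTC (n : ℕ) : Fp (12 * n + 1) =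
    (Icc (4*n+1) (6*n)).biUnion
      (fun c => (Icc ((12*n+2-c)/2) c).image (fun b => (b, c))) := by
  ext ⟨b, c⟩
  simp only [Fp, mem_filter, mem_product, mem_range, mem_biUnion, mem_Icc, mem_image]
  constructor
  · rintro ⟨⟨h1, h2⟩, h3, h4, h5, h6⟩
    exact ⟨c, by omega, b, by omega, rfl⟩
  · rintro ⟨c', hc', b', hb', heq⟩
    obtain ⟨rfl, rfl⟩ : b' = b ∧ c' = c := by simpa [Prod.ext_iff] using heq
    omega

lemma triTD (n : ℕ) :
    ∑ k ∈ range (2*n), (4*n+2+k - (8*n+1-k)/2) = 3 * n^2 + 2*n := by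
  induction n with
  | zero => simp
  | succ n ih =>
    have h2 : 2 * (n+1) = (2*n + 1) + 1 := by ring
    rw [h2, Finset.sum_range_succ, Finset.sum_range_succ]
    have hc : ∑ k ∈ range (2*n), (4*(n+1)+2+k - (8*(n+1)+1-k)/2)
        = ∑ k ∈ range (2*n), (4*n+2+k - (8*n+1-k)/2) := by
      apply Finset.sum_congr rfl
      intro k hk
      rw [mem_range] at hk
      omega
    rw [hc, ih]
    have hp : (n+1)^2 = n^2 + 2*n + 1 := by ring
    rw [hp]
    generalize n^2 = m
    omega

theorem integer_triangles_perimeter_12n_plus_1 (n : ℕ) (hn : 0 < n) :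
    T (12 * n + 1) = 3 * n ^ 2 + 2 * n := by
  rw [triTA, triTB, triTC]
  rw [Finset.card_biUnion]
  · have : ∀ c ∈ Icc (4*n+1) (6*n),
        ((Icc ((12*n+2-c)/2) c).image (fun b => (b, c))).card = c + 1 - (12*n+2-c)/2 := by
      intro c hc
      rw [Finset.card_image_of_injective _ (fun x y h => by simpa using h)]
      rw [Nat.card_Icc]
    rw [Finset.sum_congr rfl this]
    rw [← Finset.Ico_add_one_right_eq_Icc, Finset.sum_Ico_eq_sum_range]
    have he : 6*n + 1 - (4*n+1) = 2*n := by omega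
    rw [he]
    rw [← triTD n]
    apply Finset.sum_congr rfl
    intro k hk
    rw [mem_range] at hk
    omega
  · intro x hx y hy hxy
    simp only [Finset.disjoint_left, mem_image]
    rintro ⟨b, c⟩ ⟨b1, hb1, h1⟩ ⟨b2, hb2, h2⟩
    apply hxy
    cases h1; cases h2; rfl
end

section
/- For every positive integer n, the number of integer triangles with perimeter p = 12n + 2 is T(12n+2) = 3n² + n. -/
open Finset

theorem T_eq_card_sigma (p : ℕ) :
    T p = ((range ((p + 1) / 2)).sigma fun c => Icc ((p + 1 - c) / 2) c).card := by
  rw [T, ← Nat.card_eq_finsetCard]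
  refine Nat.card_congr
    { toFun := fun t => ⟨⟨t.1.2.2, t.1.2.1⟩, by
        obtain ⟨⟨a, b, c⟩, h⟩ := t
        simp only [mem_sigma, mem_range, mem_Icc] at h ⊢
        omega⟩
      invFun := fun s => ⟨(p - s.1.1 - s.1.2, s.1.2, s.1.1), by
        obtain ⟨⟨c, b⟩, h⟩ := s
        simp only [mem_sigma, mem_range, mem_Icc] at h ⊢
        omega⟩
      left_inv := ?_
      right_inv := fun _ => rfl }
  rintro ⟨⟨a, b, c⟩, h⟩
  simp only [Subtype.mk.injEq, Prod.mk.injEq, and_true] at h ⊢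
  omega

theorem T_eq_sum (p : ℕ) :
    T p = ∑ c ∈ range ((p + 1) / 2), (c + 1 - (p + 1 - c) / 2) := by
  rw [T_eq_card_sigma, card_sigma]
  exact sum_congr rfl fun c _ => Nat.card_Icc _ _

theorem sum_range_two_mul_add_half (n : ℕ) :
    ∑ j ∈ range (2 * n), (j + 1 + (j + 1) / 2) = 3 * n ^ 2 + n := by
  induction n with
  | zero => simp
  | succ n ih =>
    rw [show 2 * (n + 1) = 2 * n + 1 + 1 by ring, sum_range_succ, sum_range_succ, ih,
      show (2 * n + 1) / 2 = n by omega, show (2 * n + 1 + 1) / 2 = n + 1 by omega]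
    ring

theorem integer_triangles_perimeter_12n_plus_2_general (n : ℕ) :
    T (12 * n + 2) = 3 * n ^ 2 + n := by
  have hsplit : (12 * n + 2 + 1) / 2 = 4 * n + 1 + 2 * n := by omega
  rw [T_eq_sum, hsplit, sum_range_add, ← sum_range_two_mul_add_half n]
  have small_c_terms_vanish : ∀ c ∈ range (4 * n + 1), c + 1 - (12 * n + 2 + 1 - c) / 2 = 0 := by
    intro c hc
    rw [mem_range] at hc
    omega
  rw [sum_eq_zero small_c_terms_vanish, zero_add]
  refine sum_congr rfl fun j hj => ?_
  rw [mem_range] at hj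
  omega

theorem integer_triangles_perimeter_12n_plus_2 (n : ℕ) (hn : 0 < n) :
    T (12 * n + 2) = 3 * n ^ 2 + n :=
  integer_triangles_perimeter_12n_plus_2_general n
end

section
/- For every nonnegative integer n, the number of integer triangles with perimeter p = 12n + 3 is T(12n+3) = 3n² + 3n + 1. -/
open Finset

def oddPerimeterTriangleEquiv (m : ℕ) :
    {t : ℕ × ℕ × ℕ //
      0 < t.1 ∧ t.1 ≤ t.2.1 ∧ t.2.1 ≤ t.2.2 ∧ t.2.2 < t.1 + t.2.1 ∧
        t.1 + t.2.1 + t.2.2 = 2 * m + 1} ≃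
    {q : ℕ × ℕ // q.2 ≤ q.1 ∧ 2 * q.1 + q.2 < m} where
  toFun t := ⟨(m - t.1.2.1, m - t.1.2.2), by obtain ⟨_, _⟩ := t; dsimp only; omega⟩
  invFun q := ⟨(q.1.1 + q.1.2 + 1, m - q.1.1, m - q.1.2), by obtain ⟨_, _⟩ := q; dsimp only; omega⟩
  left_inv := by
    rintro ⟨⟨a, b, c⟩, h⟩
    ext <;> dsimp only at h ⊢ <;> omega
  right_inv := by
    rintro ⟨⟨x, y⟩, h⟩
    ext <;> dsimp only at h ⊢ <;> omega

theorem T_two_mul_add_one (m : ℕ) :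
    T (2 * m + 1) = #{q ∈ range m ×ˢ range m | q.2 ≤ q.1 ∧ 2 * q.1 + q.2 < m} := by
  rw [T, Nat.card_congr ((oddPerimeterTriangleEquiv m).trans (Equiv.subtypeEquivRight fun q => ?_)),
    Nat.card_eq_finsetCard]
  simp only [mem_filter, mem_product, mem_range]
  omega

theorem card_filter_le_two_mul_add_lt (m : ℕ) :
    #{q ∈ range m ×ˢ range m | q.2 ≤ q.1 ∧ 2 * q.1 + q.2 < m} =
      ∑ x ∈ range m, min (x + 1) (m - 2 * x) := by
  rw [card_eq_sum_card_fiberwise (f := Prod.fst) (t := range m) fun q hq => by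
    simp only [mem_coe, mem_filter, mem_product, mem_range] at hq ⊢; omega]
  refine sum_congr rfl fun x hx => ?_
  have hcolumn : {q ∈ {q ∈ range m ×ˢ range m | q.2 ≤ q.1 ∧ 2 * q.1 + q.2 < m} | q.1 = x} =
      (range (min (x + 1) (m - 2 * x))).map ⟨(x, ·), Prod.mk_right_injective x⟩ := by
    ext ⟨x', y⟩
    simp only [mem_filter, mem_product, mem_range, mem_map, Function.Embedding.coeFn_mk,
      Prod.mk.injEq] at hx ⊢
    constructor
    · rintro ⟨h, rfl⟩
      exact ⟨y, by omega, rfl, rfl⟩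
    · rintro ⟨y, hy, rfl, rfl⟩
      omega
  rw [hcolumn, card_map, card_range]

theorem sum_range_two_mul_add_one (n : ℕ) : ∑ i ∈ range n, (2 * i + 1) = n ^ 2 := by
  induction n with
  | zero => simp
  | succ n ih => rw [sum_range_succ, ih]; ring

theorem sum_range_add_one_mul_two (n : ℕ) : (∑ i ∈ range n, (i + 1)) * 2 = n * (n + 1) := by
  simpa [sum_range_succ', mul_comm] using sum_range_id_mul_two (n + 1)

theorem sum_range_min_add_one_sub_two_mul (n : ℕ) :
    ∑ x ∈ range (6 * n + 1), min (x + 1) (6 * n + 1 - 2 * x) = 3 * n ^ 2 + 3 * n + 1 := by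
  have hsplit : range (6 * n + 1) = range (2 * n + 1 + n + 3 * n) := by congr 1; ring
  rw [hsplit, sum_range_add, sum_range_add]
  have hrising : ∑ x ∈ range (2 * n + 1), min (x + 1) (6 * n + 1 - 2 * x) =
      ∑ x ∈ range (2 * n + 1), (x + 1) :=
    sum_congr rfl fun x hx => by rw [mem_range] at hx; omega
  have hfalling : ∑ i ∈ range n, min (2 * n + 1 + i + 1) (6 * n + 1 - 2 * (2 * n + 1 + i)) =
      ∑ i ∈ range n, (2 * (n - 1 - i) + 1) :=
    sum_congr rfl fun i hi => by rw [mem_range] at hi; omega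
  have hempty : ∑ i ∈ range (3 * n),
      min (2 * n + 1 + n + i + 1) (6 * n + 1 - 2 * (2 * n + 1 + n + i)) = 0 :=
    sum_eq_zero fun i _ => by omega
  rw [hrising, hfalling, hempty, sum_range_reflect (fun i => 2 * i + 1), sum_range_two_mul_add_one]
  linarith [sum_range_add_one_mul_two (2 * n + 1)]

theorem integer_triangles_perimeter_12n_plus_3 (n : ℕ) :
    T (12 * n + 3) = 3 * n ^ 2 + 3 * n + 1 := by
  rw [show 12 * n + 3 = 2 * (6 * n + 1) + 1 by ring, T_two_mul_add_one,
    card_filter_le_two_mul_add_lt, sum_range_min_add_one_sub_two_mul]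
end

section
/- For every nonnegative integer n, the number of integer triangles with perimeter p = 12n + 4 is T(12n+4) = 3n² + 2n. -/
lemma aux_sum_6u5 (n : ℕ) : ∑ u ∈ Finset.range n, (6 * u + 5) = 3 * n ^ 2 + 2 * n := by
  induction n with
  | zero => simp
  | succ m ih => rw [Finset.sum_range_succ, ih]; ring

theorem integer_triangles_perimeter_12n_plus_4 (n : ℕ) :
    T (12 * n + 4) = 3 * n ^ 2 + 2 * n := by
  set S : Finset (ℕ × ℕ × ℕ) :=
    (Finset.Icc 1 (12 * n + 4) ×ˢ Finset.Icc 1 (12 * n + 4) ×ˢ Finset.Icc 1 (12 * n + 4)).filter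
      (fun t => 0 < t.1 ∧ t.1 ≤ t.2.1 ∧ t.2.1 ≤ t.2.2 ∧ t.2.2 < t.1 + t.2.1 ∧
        t.1 + t.2.1 + t.2.2 = 12 * n + 4) with hS
  set Tgt : Finset ((_ : ℕ) × ℕ) :=
    (Finset.range n).sigma (fun u => Finset.range (6 * u + 5)) with hT
  have h1 : T (12 * n + 4) = S.card := by
    rw [T]
    have e : {t : ℕ × ℕ × ℕ //
        0 < t.1 ∧ t.1 ≤ t.2.1 ∧ t.2.1 ≤ t.2.2 ∧ t.2.2 < t.1 + t.2.1 ∧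
          t.1 + t.2.1 + t.2.2 = 12 * n + 4} ≃ {t : ℕ × ℕ × ℕ // t ∈ S} := by
      refine Equiv.subtypeEquivRight ?_
      rintro ⟨a, b, c⟩
      simp only [hS, Finset.mem_filter, Finset.mem_product, Finset.mem_Icc]
      constructor
      · rintro ⟨h1, h2, h3, h4, h5⟩
        refine ⟨⟨⟨?_, ?_⟩, ⟨?_, ?_⟩, ?_, ?_⟩, h1, h2, h3, h4, h5⟩ <;> omega
      · rintro ⟨-, h⟩; exact h
    rw [Nat.card_congr e, Nat.card_eq_finsetCard]
  have h2 : S.card = Tgt.card := by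
    refine Finset.card_bij
      (fun t _ => (⟨n - 1 - ((t.1 + t.2.1 - (6 * n + 2) - 1) / 2),
        2 * (t.2.2 - t.2.1) + (t.1 + t.2.1 - (6 * n + 2) - 1) % 2⟩ : (_ : ℕ) × ℕ))
      ?_ ?_ ?_
    · rintro ⟨a, b, c⟩ ha
      simp only [hS, Finset.mem_filter, Finset.mem_product, Finset.mem_Icc] at ha
      obtain ⟨-, k1, k2, k3, k4, k5⟩ := ha
      simp only [hT, Finset.mem_sigma, Finset.mem_range]
      obtain ⟨s, hs⟩ : ∃ s, a + b = 6 * n + 3 + s := ⟨a + b - (6 * n + 3), by omega⟩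
      obtain ⟨q, e, hqe, he⟩ : ∃ q e, s = 2 * q + e ∧ e < 2 :=
        ⟨s / 2, s % 2, (Nat.div_add_mod s 2).symm, Nat.mod_lt s (by norm_num)⟩
      obtain ⟨r, hr⟩ : ∃ r, c = b + r := ⟨c - b, by omega⟩
      rw [show a + b - (6 * n + 2) - 1 = 2 * q + e by omega,
        show c - b = r by omega,
        show (2 * q + e) / 2 = q by omega, show (2 * q + e) % 2 = e by omega]
      have hq : q < n := by omega
      constructor <;> omega
    · rintro ⟨a₁, b₁, c₁⟩ ha₁ ⟨a₂, b₂, c₂⟩ ha₂ h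
      simp only [hS, Finset.mem_filter, Finset.mem_product, Finset.mem_Icc] at ha₁ ha₂
      obtain ⟨-, k1, k2, k3, k4, k5⟩ := ha₁
      obtain ⟨-, m1, m2, m3, m4, m5⟩ := ha₂
      obtain ⟨s₁, hs₁⟩ : ∃ s, a₁ + b₁ = 6 * n + 3 + s := ⟨a₁ + b₁ - (6 * n + 3), by omega⟩
      obtain ⟨q₁, e₁, hqe₁, he₁⟩ : ∃ q e, s₁ = 2 * q + e ∧ e < 2 :=
        ⟨s₁ / 2, s₁ % 2, (Nat.div_add_mod s₁ 2).symm, Nat.mod_lt s₁ (by norm_num)⟩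
      obtain ⟨r₁, hr₁⟩ : ∃ r, c₁ = b₁ + r := ⟨c₁ - b₁, by omega⟩
      obtain ⟨s₂, hs₂⟩ : ∃ s, a₂ + b₂ = 6 * n + 3 + s := ⟨a₂ + b₂ - (6 * n + 3), by omega⟩
      obtain ⟨q₂, e₂, hqe₂, he₂⟩ : ∃ q e, s₂ = 2 * q + e ∧ e < 2 :=
        ⟨s₂ / 2, s₂ % 2, (Nat.div_add_mod s₂ 2).symm, Nat.mod_lt s₂ (by norm_num)⟩
      obtain ⟨r₂, hr₂⟩ : ∃ r, c₂ = b₂ + r := ⟨c₂ - b₂, by omega⟩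
      have E1 : a₁ + b₁ - (6 * n + 2) - 1 = 2 * q₁ + e₁ := by omega
      have E2 : a₂ + b₂ - (6 * n + 2) - 1 = 2 * q₂ + e₂ := by omega
      have D1 : (2 * q₁ + e₁) / 2 = q₁ := by omega
      have D2 : (2 * q₂ + e₂) / 2 = q₂ := by omega
      have M1 : (2 * q₁ + e₁) % 2 = e₁ := by omega
      have M2 : (2 * q₂ + e₂) % 2 = e₂ := by omega
      have C1 : c₁ - b₁ = r₁ := by omega
      have C2 : c₂ - b₂ = r₂ := by omega
      have hf := congrArg Sigma.fst h
      have hsnd := congrArg (fun q : (_ : ℕ) × ℕ => q.snd) h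
      clear h
      simp only at hf hsnd
      rw [E1, E2, D1, D2] at hf
      rw [E1, E2, M1, M2, C1, C2] at hsnd
      have hq₁ : q₁ < n := by omega
      have hq₂ : q₂ < n := by omega
      have hqq : q₁ = q₂ := by omega
      have heq : e₁ = e₂ ∧ r₁ = r₂ := by constructor <;> omega
      have hres : a₁ = a₂ ∧ b₁ = b₂ ∧ c₁ = c₂ := ⟨by omega, by omega, by omega⟩
      obtain ⟨ea, eb, ec⟩ := hres
      subst ea; subst eb; subst ec; rfl
    · rintro ⟨u', w⟩ hb
      simp only [hT, Finset.mem_sigma, Finset.mem_range] at hb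
      obtain ⟨hu, hw⟩ := hb
      obtain ⟨r, e, hre, he⟩ : ∃ r e, w = 2 * r + e ∧ e < 2 :=
        ⟨w / 2, w % 2, (Nat.div_add_mod w 2).symm, Nat.mod_lt w (by norm_num)⟩
      obtain ⟨d, hd⟩ : ∃ d, n = u' + 1 + d := ⟨n - 1 - u', by omega⟩
      obtain ⟨g, hg⟩ : ∃ g, r + g = 3 * u' + 2 := ⟨3 * u' + 2 - r, by omega⟩
      obtain ⟨f, hf⟩ : ∃ f, e + f = 1 := ⟨1 - e, by omega⟩
      refine ⟨(4 * d + 2 + 2 * e + r,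
        r + 2 * g + 4 * d + 2 + f,
        2 * r + 2 * g + 4 * d + 2 + f), ?_, ?_⟩
      · simp only [hS, Finset.mem_filter, Finset.mem_product, Finset.mem_Icc]
        refine ⟨⟨⟨?_, ?_⟩, ⟨?_, ?_⟩, ?_, ?_⟩, ?_, ?_, ?_, ?_, ?_⟩ <;> omega
      · dsimp only
        rw [show 4 * d + 2 + 2 * e + r + (r + 2 * g + 4 * d + 2 + f)
              - (6 * n + 2) - 1 = 2 * d + e by omega]
        rw [show (2 * d + e) / 2 = d by omega, show (2 * d + e) % 2 = e by omega]
        rw [show 2 * r + 2 * g + 4 * d + 2 + f - (r + 2 * g + 4 * d + 2 + f) = r by omega]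
        refine Sigma.ext ?_ (heq_of_eq ?_) <;> dsimp only <;> omega
  rw [h1, h2, hT, Finset.card_sigma]
  simp only [Finset.card_range]
  exact aux_sum_6u5 n
end

section
/- For every nonnegative integer n, the number of integer triangles with perimeter p = 12n + 5 is T(12n+5) = 3n² + 4n + 1. -/
lemma sum_half_aux (m : ℕ) : ∑ w ∈ Finset.range m, (w + 1) / 2 = m * m / 4 := by
  induction m with
  | zero => simp
  | succ m ih =>
    rw [Finset.sum_range_succ, ih]
    rcases Nat.even_or_odd m with ⟨a, ha⟩ | ⟨a, ha⟩ <;> subst ha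
    · have h1 : (a + a) * (a + a) = 4 * (a * a) := by ring
      have h2 : (a + a + 1) * (a + a + 1) = 4 * (a * a) + 4 * a + 1 := by ring
      rw [h1, h2]; omega
    · have h1 : (2 * a + 1) * (2 * a + 1) = 4 * (a * a) + 4 * a + 1 := by ring
      have h2 : (2 * a + 1 + 1) * (2 * a + 1 + 1) = 4 * (a * a) + 8 * a + 4 := by ring
      rw [h1, h2]; omega

theorem integer_triangles_perimeter_12n_plus_5 (n : ℕ) :
    T (12 * n + 5) = 3 * n ^ 2 + 4 * n + 1 := by
  classical
  set F : Finset (ℕ × ℕ) :=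
    (Finset.range (2 * n + 1)).biUnion
      (fun w => (Finset.Icc (2 * w) (3 * n + (w + 1) / 2)).image (fun x => (x, w))) with hF
  have hmem : ∀ q : ℕ × ℕ, q ∈ F ↔ 2 * q.2 ≤ q.1 ∧ 2 * q.1 ≤ 6 * n + 1 + q.2 := by
    rintro ⟨x, w⟩
    constructor
    · intro h
      rcases Finset.mem_biUnion.1 h with ⟨w', hw', h2⟩
      rcases Finset.mem_image.1 h2 with ⟨x', hx', heq⟩
      rw [Finset.mem_Icc] at hx'
      rw [Finset.mem_range] at hw'
      obtain ⟨rfl, rfl⟩ : x' = x ∧ w' = w := by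
        simpa [Prod.ext_iff] using heq
      simp only
      omega
    · rintro ⟨h1, h2⟩
      apply Finset.mem_biUnion.2
      refine ⟨w, Finset.mem_range.2 (by omega), Finset.mem_image.2 ⟨x, Finset.mem_Icc.2 (by omega), rfl⟩⟩
  -- the equivalence with the triangle set
  have e : {t : ℕ × ℕ × ℕ //
      0 < t.1 ∧ t.1 ≤ t.2.1 ∧ t.2.1 ≤ t.2.2 ∧ t.2.2 < t.1 + t.2.1 ∧
        t.1 + t.2.1 + t.2.2 = 12 * n + 5} ≃ {q : ℕ × ℕ // q ∈ F} :=
    { toFun := fun t => ⟨(t.1.1 - 1, 6 * n + 2 - t.1.2.2), by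
        rw [hmem]
        obtain ⟨⟨a, b, c⟩, h⟩ := t
        simp only at h ⊢
        omega⟩
      invFun := fun q => ⟨(q.1.1 + 1, 6 * n + 2 + q.1.2 - q.1.1, 6 * n + 2 - q.1.2), by
        have h := (hmem q.1).1 q.2
        simp only at h ⊢
        omega⟩
      left_inv := fun t => by
        obtain ⟨⟨a, b, c⟩, h⟩ := t
        apply Subtype.ext
        simp only at h ⊢
        simp only [Prod.ext_iff]
        omega
      right_inv := fun q => by
        obtain ⟨⟨x, w⟩, hq⟩ := q
        have h := (hmem (x, w)).1 hq
        apply Subtype.ext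
        simp only at h ⊢
        simp only [Prod.ext_iff]
        omega }
  have hcardS : T (12 * n + 5) = F.card := by
    rw [T, Nat.card_congr e, Nat.card_eq_finsetCard]
  rw [hcardS]
  -- compute the cardinality of F
  have hdisj : (↑(Finset.range (2 * n + 1)) : Set ℕ).PairwiseDisjoint
      (fun w => (Finset.Icc (2 * w) (3 * n + (w + 1) / 2)).image (fun x => (x, w))) := by
    intro a _ b _ hab
    simp only [Finset.disjoint_left, Finset.mem_image]
    rintro ⟨x, w⟩ ⟨x1, _, h1⟩ ⟨x2, _, h2⟩
    apply hab
    simp only [Prod.ext_iff] at h1 h2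
    omega
  rw [hF, Finset.card_biUnion hdisj]
  have hterm : ∀ w ∈ Finset.range (2 * n + 1),
      ((Finset.Icc (2 * w) (3 * n + (w + 1) / 2)).image (fun x => (x, w))).card
        = 3 * n + (w + 1) / 2 + 1 - 2 * w := by
    intro w _
    rw [Finset.card_image_of_injective _ (fun a b h => by simpa using h), Nat.card_Icc]
  rw [Finset.sum_congr rfl hterm]
  have A : ∑ w ∈ Finset.range (2 * n + 1), (3 * n + (w + 1) / 2 + 1 - 2 * w)
      + ∑ w ∈ Finset.range (2 * n + 1), 2 * w
      = ∑ w ∈ Finset.range (2 * n + 1), (3 * n + (w + 1) / 2 + 1) := by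
    rw [← Finset.sum_add_distrib]
    apply Finset.sum_congr rfl
    intro w hw
    rw [Finset.mem_range] at hw
    omega
  have B : ∑ w ∈ Finset.range (2 * n + 1), 2 * w = (2 * n + 1) * (2 * n) := by
    have h := Finset.sum_range_id_mul_two (2 * n + 1)
    have h2 : ∑ w ∈ Finset.range (2 * n + 1), 2 * w
        = (∑ w ∈ Finset.range (2 * n + 1), w) * 2 := by
      rw [Finset.sum_mul]
      exact Finset.sum_congr rfl (fun w _ => by ring)
    rw [h2, h]
    norm_num
  have C : ∑ w ∈ Finset.range (2 * n + 1), (3 * n + (w + 1) / 2 + 1)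
      = (2 * n + 1) * (3 * n + 1) + (2 * n + 1) * (2 * n + 1) / 4 := by
    have hc : ∀ w ∈ Finset.range (2 * n + 1),
        3 * n + (w + 1) / 2 + 1 = (3 * n + 1) + (w + 1) / 2 := by intros; omega
    rw [Finset.sum_congr rfl hc, Finset.sum_add_distrib, Finset.sum_const,
      Finset.card_range, smul_eq_mul, sum_half_aux]
  rw [B, C] at A
  have e1 : (2 * n + 1) * (2 * n) = 4 * (n * n) + 2 * n := by ring
  have e2 : (2 * n + 1) * (3 * n + 1) = 6 * (n * n) + 5 * n + 1 := by ring
  have e3 : (2 * n + 1) * (2 * n + 1) = 4 * (n * n) + 4 * n + 1 := by ring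
  rw [e1, e2, e3] at A
  have e4 : 3 * n ^ 2 + 4 * n + 1 = 3 * (n * n) + 4 * n + 1 := by ring
  rw [e4]
  set m := n * n with hm
  omega
end

section
/- For every nonnegative integer n, the number of integer triangles with perimeter p = 12n + 6 is T(12n+6) = 3n² + 3n + 1. -/
open Finset

set_option maxRecDepth 40000

def Tri (p : ℕ) : Finset (ℕ × ℕ × ℕ) :=
  ((range (p+1)) ×ˢ (range (p+1)) ×ˢ (range (p+1))).filter
    (fun t => 0 < t.1 ∧ t.1 ≤ t.2.1 ∧ t.2.1 ≤ t.2.2 ∧ t.2.2 < t.1 + t.2.1 ∧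
      t.1 + t.2.1 + t.2.2 = p)

lemma mem_Tri {p : ℕ} {t : ℕ × ℕ × ℕ} :
    t ∈ Tri p ↔ 0 < t.1 ∧ t.1 ≤ t.2.1 ∧ t.2.1 ≤ t.2.2 ∧ t.2.2 < t.1 + t.2.1 ∧
      t.1 + t.2.1 + t.2.2 = p := by
  obtain ⟨a, b, c⟩ := t
  simp only [Tri, Finset.mem_filter, Finset.mem_product, Finset.mem_range]
  constructor
  · rintro ⟨_, h⟩; exact h
  · intro h; exact ⟨by omega, h⟩

/-- Boundary triangles: the ones not coming from the shift map. -/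
def Bd (p : ℕ) : Finset (ℕ × ℕ × ℕ) :=
  (Tri p).filter (fun t => t.1 = 1 ∨ t.1 = t.2.1 ∨ t.2.1 = t.2.2)

lemma shift (p : ℕ) : (Tri (p+6)).card = (Tri p).card + (Bd (p+6)).card := by
  have himg : (Tri p).image (fun t => (t.1+1, t.2.1+2, t.2.2+3)) =
      (Tri (p+6)).filter (fun t => ¬(t.1 = 1 ∨ t.1 = t.2.1 ∨ t.2.1 = t.2.2)) := by
    ext t
    simp only [Finset.mem_image, Finset.mem_filter, mem_Tri]
    constructor
    · rintro ⟨⟨a, b, c⟩, h, rfl⟩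
      simp only at *
      omega
    · rintro ⟨h1, h2⟩
      obtain ⟨a, b, c⟩ := t
      simp only at *
      refine ⟨(a-1, b-2, c-3), ?_, ?_⟩
      · dsimp only; omega
      · simp only [Prod.mk.injEq]; omega
  have hinj : Set.InjOn (fun t : ℕ × ℕ × ℕ => (t.1+1, t.2.1+2, t.2.2+3)) (Tri p) := by
    intro x _ y _ h
    obtain ⟨a, b, c⟩ := x; obtain ⟨d, e, f⟩ := y
    simp only [Prod.mk.injEq] at h ⊢
    omega
  have h1 := Finset.card_image_of_injOn hinj
  have h2 := Finset.card_filter_add_card_filter_not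
    (s := Tri (p+6)) (p := fun t => t.1 = 1 ∨ t.1 = t.2.1 ∨ t.2.1 = t.2.2)
  rw [himg] at h1
  unfold Bd
  omega

lemma bd_card (n q lo1 hi1 lo2 hi2 : ℕ) (hq : q = 12*n + 12 ∨ q = 12*n + 18)
    (h1 : lo1 = q/4 + 1) (h2 : hi1 = q/3) (h3 : lo2 = q/3) (h4 : hi2 = q/2 - 1) :
    (Bd q).card = (hi1 + 1 - lo1) + (hi2 + 1 - lo2) - 1 := by
  have hset : Bd q = ((Finset.Icc lo1 hi1).image (fun a => (a, a, q - 2*a)))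
      ∪ ((Finset.Icc lo2 hi2).image (fun b => (q - 2*b, b, b))) := by
    ext ⟨a, b, c⟩
    simp only [Bd, Finset.mem_filter, mem_Tri, Finset.mem_union, Finset.mem_image,
      Finset.mem_Icc, Prod.mk.injEq]
    constructor
    · rintro ⟨⟨p1, p2, p3, p4, p5⟩, h | h | h⟩
      · exfalso; omega
      · exact Or.inl ⟨a, by omega, rfl, by omega, by omega⟩
      · exact Or.inr ⟨b, by omega, by omega, rfl, by omega⟩
    · rintro (⟨x, hx, rfl, rfl, rfl⟩ | ⟨x, hx, h5, rfl, rfl⟩) <;> omega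
  have hinter : ((Finset.Icc lo1 hi1).image (fun a => (a, a, q - 2*a)))
      ∩ ((Finset.Icc lo2 hi2).image (fun b => (q - 2*b, b, b))) = {(q/3, q/3, q/3)} := by
    ext ⟨a, b, c⟩
    simp only [Finset.mem_inter, Finset.mem_image, Finset.mem_Icc, Prod.mk.injEq,
      Finset.mem_singleton]
    constructor
    · rintro ⟨⟨x, hx, rfl, rfl, rfl⟩, ⟨y, hy, e1, e2, e3⟩⟩
      refine ⟨?_, ?_, ?_⟩ <;> omega
    · rintro ⟨rfl, rfl, rfl⟩
      exact ⟨⟨q/3, by omega, by omega, rfl, by omega⟩,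
             ⟨q/3, by omega, by omega, rfl, by omega⟩⟩
  have hc1 : ((Finset.Icc lo1 hi1).image (fun a => (a, a, q - 2*a))).card = hi1 + 1 - lo1 := by
    rw [Finset.card_image_of_injOn, Nat.card_Icc]
    intro x _ y _ h
    simpa using congrArg Prod.fst h
  have hc2 : ((Finset.Icc lo2 hi2).image (fun b => (q - 2*b, b, b))).card = hi2 + 1 - lo2 := by
    rw [Finset.card_image_of_injOn, Nat.card_Icc]
    intro x _ y _ h
    simpa using congrArg (fun t : ℕ × ℕ × ℕ => t.2.1) h
  have hu := Finset.card_union_add_card_inter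
    ((Finset.Icc lo1 hi1).image (fun a => (a, a, q - 2*a)))
    ((Finset.Icc lo2 hi2).image (fun b => (q - 2*b, b, b)))
  rw [hinter, Finset.card_singleton, hc1, hc2] at hu
  rw [hset]
  omega

lemma main_card (n : ℕ) : (Tri (12*n+6)).card = 3*n^2 + 3*n + 1 ∧
    (Tri (12*n+12)).card = 3*n^2 + 6*n + 3 := by
  induction n with
  | zero =>
    constructor
    · show (Tri 6).card = 1; decide
    · show (Tri 12).card = 3; decide
  | succ n ih =>
    obtain ⟨ih1, ih2⟩ := ih
    have b1 : (Bd (12*n+18)).card = 3*n + 4 := by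
      have := bd_card n (12*n+18) (3*n+5) (4*n+6) (4*n+6) (6*n+8) (Or.inr rfl)
        (by omega) (by omega) (by omega) (by omega)
      omega
    have b2 : (Bd (12*n+24)).card = 3*n + 5 := by
      have := bd_card (n+1) (12*n+24) (3*n+7) (4*n+8) (4*n+8) (6*n+11) (Or.inl (by ring))
        (by omega) (by omega) (by omega) (by omega)
      omega
    have s1 : (Tri (12*n+18)).card = (Tri (12*n+12)).card + (Bd (12*n+18)).card := shift (12*n+12)
    have s2 : (Tri (12*n+24)).card = (Tri (12*n+18)).card + (Bd (12*n+24)).card := shift (12*n+18)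
    constructor
    · have e : 12*(n+1)+6 = 12*n+18 := by ring
      rw [e, s1, ih2, b1]; ring
    · have e : 12*(n+1)+12 = 12*n+24 := by ring
      rw [e, s2, s1, ih2, b1, b2]; ring

lemma T_eq (p : ℕ) : T p = (Tri p).card := by
  have h : {t : ℕ × ℕ × ℕ | 0 < t.1 ∧ t.1 ≤ t.2.1 ∧ t.2.1 ≤ t.2.2 ∧
      t.2.2 < t.1 + t.2.1 ∧ t.1 + t.2.1 + t.2.2 = p} = ↑(Tri p) := by
    ext t; simp [mem_Tri]
  calc T p = Nat.card {t : ℕ × ℕ × ℕ | 0 < t.1 ∧ t.1 ≤ t.2.1 ∧ t.2.1 ≤ t.2.2 ∧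
      t.2.2 < t.1 + t.2.1 ∧ t.1 + t.2.1 + t.2.2 = p} := rfl
    _ = Set.ncard {t : ℕ × ℕ × ℕ | 0 < t.1 ∧ t.1 ≤ t.2.1 ∧ t.2.1 ≤ t.2.2 ∧
      t.2.2 < t.1 + t.2.1 ∧ t.1 + t.2.1 + t.2.2 = p} := Nat.card_coe_set_eq _
    _ = (Tri p).card := by rw [h, Set.ncard_coe_finset]

theorem integer_triangles_perimeter_12n_plus_6 (n : ℕ) :
    T (12 * n + 6) = 3 * n ^ 2 + 3 * n + 1 := by
  rw [T_eq]
  exact (main_card n).1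
end

section
/- For every nonnegative integer n, the number of integer triangles with perimeter p = 12n + 7 is T(12n+7) = 3n² + 5n + 2. -/
private lemma sum_aux (n : ℕ) :
    ∑ w ∈ Finset.range (2*n+1), ((6*n+2-3*w)/2 + 1) = 3*n^2+5*n+2 := by
  induction n with
  | zero => decide
  | succ m ih =>
    have h1 : 2*(m+1)+1 = (2*m+1) + 1 + 1 := by ring
    rw [h1, Finset.sum_range_succ, Finset.sum_range_succ]
    have h2 : ∑ w ∈ Finset.range (2*m+1), ((6*(m+1)+2-3*w)/2 + 1)
        = ∑ w ∈ Finset.range (2*m+1), (((6*m+2-3*w)/2 + 1) + 3) := by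
      apply Finset.sum_congr rfl; intro w hw
      simp only [Finset.mem_range] at hw
      omega
    rw [h2, Finset.sum_add_distrib, Finset.sum_const, ih, Finset.card_range]
    have ha : (6*(m+1)+2-3*(2*m+1))/2 + 1 = 3 := by omega
    have hb : (6*(m+1)+2-3*(2*m+1+1))/2 + 1 = 2 := by omega
    rw [ha, hb]
    ring

theorem integer_triangles_perimeter_12n_plus_7 (n : ℕ) :
    T (12 * n + 7) = 3 * n ^ 2 + 5 * n + 2 := by
  classical
  set S : Finset (ℕ × ℕ) :=
    (Finset.range (3*n+2) ×ˢ Finset.range (2*n+1)).filter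
      (fun q => 2*q.1 + 3*q.2 ≤ 6*n+2) with hS
  have e : {t : ℕ × ℕ × ℕ //
      0 < t.1 ∧ t.1 ≤ t.2.1 ∧ t.2.1 ≤ t.2.2 ∧ t.2.2 < t.1 + t.2.1 ∧
        t.1 + t.2.1 + t.2.2 = 12*n+7} ≃ {q : ℕ × ℕ // q ∈ S} :=
  { toFun := fun t => ⟨(t.1.2.2 - t.1.2.1, 6*n+3 - t.1.2.2), by
      obtain ⟨⟨a,b,c⟩, h⟩ := t
      simp only [hS, Finset.mem_filter, Finset.mem_product, Finset.mem_range]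
      dsimp only at h ⊢
      omega⟩
    invFun := fun q => ⟨(1 + q.1.1 + 2*q.1.2, 6*n+3 - q.1.2 - q.1.1, 6*n+3 - q.1.2), by
      obtain ⟨⟨y,w⟩, h⟩ := q
      simp only [hS, Finset.mem_filter, Finset.mem_product, Finset.mem_range] at h
      dsimp only at h ⊢
      omega⟩
    left_inv := fun t => by
      obtain ⟨⟨a,b,c⟩, h⟩ := t
      dsimp only at h
      apply Subtype.ext
      dsimp only
      rw [Prod.ext_iff, Prod.ext_iff]
      dsimp only
      refine ⟨by omega, by omega, by omega⟩
    right_inv := fun q => by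
      obtain ⟨⟨y,w⟩, h⟩ := q
      simp only [hS, Finset.mem_filter, Finset.mem_product, Finset.mem_range] at h
      apply Subtype.ext
      dsimp only
      rw [Prod.ext_iff]
      dsimp only
      refine ⟨by omega, by omega⟩ }
  have h1 : T (12*n+7) = S.card := by
    rw [T, Nat.card_congr e, Nat.card_eq_fintype_card, Fintype.card_coe]
  rw [h1]
  have hfib : ∀ q ∈ S, Prod.snd q ∈ Finset.range (2*n+1) := by
    intro q hq
    simp only [hS, Finset.mem_filter, Finset.mem_product, Finset.mem_range] at hq ⊢
    omega
  rw [Finset.card_eq_sum_card_fiberwise hfib]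
  have hsum : ∀ w ∈ Finset.range (2*n+1),
      (S.filter (fun q => q.2 = w)).card = (6*n+2-3*w)/2 + 1 := by
    intro w hw
    simp only [Finset.mem_range] at hw
    have himg : S.filter (fun q => q.2 = w)
        = (Finset.range ((6*n+2-3*w)/2+1)).image (fun y => (y, w)) := by
      ext ⟨y', w'⟩
      simp only [hS, Finset.mem_filter, Finset.mem_product, Finset.mem_range,
        Finset.mem_image, Prod.mk.injEq]
      constructor
      · rintro ⟨⟨⟨hy, hw'⟩, hle⟩, rfl⟩
        exact ⟨y', by omega, rfl, rfl⟩
      · rintro ⟨y, hy, rfl, rfl⟩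
        refine ⟨⟨⟨by omega, by omega⟩, by omega⟩, rfl⟩
    rw [himg, Finset.card_image_of_injective _ (fun a b hab => by
      simpa using hab), Finset.card_range]
  rw [Finset.sum_congr rfl hsum, sum_aux]
end

section
/- For every nonnegative integer n, the number of integer triangles with perimeter p = 12n + 8 is T(12n+8) = 3n² + 4n + 1. -/
/-- Parameter finset: pairs (t, u) with t ≤ n and u < 6(n-t)+1. -/
def Hset (n : ℕ) : Finset (ℕ × ℕ) :=
  (Finset.range (n+1)).biUnion (fun t => {t} ×ˢ Finset.range (6*(n-t)+1))

lemma mem_Hset {n : ℕ} {q : ℕ × ℕ} :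
    q ∈ Hset n ↔ q.1 ≤ n ∧ q.2 < 6*(n-q.1)+1 := by
  obtain ⟨t, u⟩ := q
  simp only [Hset, Finset.mem_biUnion, Finset.mem_product, Finset.mem_singleton,
    Finset.mem_range]
  constructor
  · rintro ⟨a, ha, rfl, h⟩; omega
  · rintro ⟨h1, h2⟩; exact ⟨t, by omega, rfl, by omega⟩

/-- decoding map from parameters to triangles -/
def tri (n : ℕ) (q : ℕ × ℕ) : ℕ × ℕ × ℕ :=
  if q.2 ≤ 3*(n - q.1) then
    (4*q.1 + q.2 + 2, 6*n+3 - 2*q.1 - q.2, 6*n+3 - 2*q.1)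
  else
    (4*q.1 + 4 + (q.2 - (3*(n-q.1)+1)), 6*n+2 - 2*q.1 - (q.2 - (3*(n-q.1)+1)), 6*n+2 - 2*q.1)

lemma tri_image (n : ℕ) :
    tri n '' ↑(Hset n) =
      {x : ℕ × ℕ × ℕ | 0 < x.1 ∧ x.1 ≤ x.2.1 ∧ x.2.1 ≤ x.2.2 ∧
        x.2.2 < x.1 + x.2.1 ∧ x.1 + x.2.1 + x.2.2 = 12*n+8} := by
  ext ⟨a, b, c⟩
  simp only [Set.mem_image, Finset.mem_coe, Set.mem_setOf_eq]
  constructor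
  · rintro ⟨⟨t, u⟩, hq, heq⟩
    rw [mem_Hset] at hq
    simp only at hq
    simp only [tri] at heq
    split_ifs at heq with h <;>
      · simp only [Prod.mk.injEq] at heq
        obtain ⟨e1, e2, e3⟩ := heq
        refine ⟨?_, ?_, ?_, ?_, ?_⟩ <;> omega
  · rintro ⟨ha, hab, hbc, htri, hsum⟩
    have hc1 : c ≤ 6*n+3 := by omega
    have hc2 : 4*n+3 ≤ c := by omega
    set i := 6*n+3 - c with hi
    set t := i / 2 with ht
    have hi2 : i ≤ 2*n := by omega
    by_cases hpar : i % 2 = 0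
    · refine ⟨(t, c - b), ?_, ?_⟩
      · rw [mem_Hset]; constructor <;> simp only <;> omega
      · simp only [tri]
        have hif : c - b ≤ 3*(n - t) := by omega
        rw [if_pos hif]
        have : (4*t + (c-b) + 2, 6*n+3 - 2*t - (c-b), 6*n+3 - 2*t) = (a, b, c) := by
          refine Prod.ext ?_ (Prod.ext ?_ ?_) <;> simp only <;> omega
        exact this
    · refine ⟨(t, (c - b) + 3*(n-t) + 1), ?_, ?_⟩
      · rw [mem_Hset]; constructor <;> simp only <;> omega
      · simp only [tri]
        have hif : ¬ ((c - b) + 3*(n-t) + 1 ≤ 3*(n - t)) := by omega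
        rw [if_neg hif]
        have : (4*t + 4 + ((c-b) + 3*(n-t) + 1 - (3*(n-t)+1)),
            6*n+2 - 2*t - ((c-b) + 3*(n-t) + 1 - (3*(n-t)+1)), 6*n+2 - 2*t) = (a, b, c) := by
          refine Prod.ext ?_ (Prod.ext ?_ ?_) <;> simp only <;> omega
        exact this

lemma tri_injOn (n : ℕ) : Set.InjOn (tri n) ↑(Hset n) := by
  rintro ⟨t, u⟩ hq ⟨t', u'⟩ hq' heq
  rw [Finset.mem_coe, mem_Hset] at hq hq'
  simp only at hq hq'
  simp only [tri] at heq
  split_ifs at heq with h1 h2 h2 <;>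
    simp only [Prod.mk.injEq] at heq ⊢ <;> omega

lemma sum_lin (n : ℕ) : ∑ s ∈ Finset.range (n+1), (6*s+1) = 3*n^2 + 4*n + 1 := by
  induction n with
  | zero => simp
  | succ k ih => rw [Finset.sum_range_succ, ih]; ring

lemma Hset_card (n : ℕ) : (Hset n).card = 3*n^2 + 4*n + 1 := by
  rw [Hset, Finset.card_biUnion]
  · have : ∀ t ∈ Finset.range (n+1),
        ({t} ×ˢ Finset.range (6*(n-t)+1)).card = 6*(n-t)+1 := by
      intro t _; simp
    rw [Finset.sum_congr rfl this]
    have hre := Finset.sum_range_reflect (fun s => 6*s+1) (n+1)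
    simp only [Nat.add_sub_cancel] at hre
    rw [hre, sum_lin]
  · intro x _ y _ hxy
    simp only [Finset.disjoint_left, Finset.mem_product, Finset.mem_singleton]
    rintro ⟨a, b⟩ ⟨rfl, -⟩ ⟨h, -⟩
    exact hxy h

theorem integer_triangles_perimeter_12n_plus_8 (n : ℕ) :
    T (12 * n + 8) = 3 * n ^ 2 + 4 * n + 1 := by
  have key : T (12 * n + 8) =
      ({x : ℕ × ℕ × ℕ | 0 < x.1 ∧ x.1 ≤ x.2.1 ∧ x.2.1 ≤ x.2.2 ∧
        x.2.2 < x.1 + x.2.1 ∧ x.1 + x.2.1 + x.2.2 = 12*n+8} : Set (ℕ × ℕ × ℕ)).ncard := rfl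
  rw [key, ← tri_image n, Set.ncard_image_of_injOn (tri_injOn n),
    Set.ncard_coe_finset, Hset_card]
end

section
/- For every nonnegative integer n, the number of integer triangles with perimeter p = 12n + 9 is T(12n+9) = 3n² + 6n + 3. -/
open Finset

/-- The finset of triangles of perimeter `12n+9`. -/
def triFin (n : ℕ) : Finset (ℕ × ℕ × ℕ) :=
  ((range (12*n+10)) ×ˢ (range (12*n+10)) ×ˢ (range (12*n+10))).filter
    (fun t => 0 < t.1 ∧ t.1 ≤ t.2.1 ∧ t.2.1 ≤ t.2.2 ∧ t.2.2 < t.1 + t.2.1 ∧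
      t.1 + t.2.1 + t.2.2 = 12*n+9)

lemma mem_triFin (n a b c : ℕ) :
    (a, b, c) ∈ triFin n ↔ (0 < a ∧ a ≤ b ∧ b ≤ c ∧ c < a + b ∧ a + b + c = 12*n+9) := by
  simp only [triFin, mem_filter, mem_product, mem_range]
  try dsimp only
  omega

lemma T_eq_card (n : ℕ) : T (12*n+9) = (triFin n).card := by
  rw [T, ← Nat.card_eq_finsetCard]
  refine Nat.card_congr (Equiv.subtypeEquivRight (fun t => ?_))
  obtain ⟨a, b, c⟩ := t
  exact (mem_triFin n a b c).symm

/-- The index finset. -/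
def idxFin (n : ℕ) : Finset (ℕ × ℕ) :=
  (range (n+1)).biUnion (fun j => (range (6*j+3)).image (fun i => (j, i)))

lemma mem_idxFin (n j i : ℕ) :
    (j, i) ∈ idxFin n ↔ j < n + 1 ∧ i < 6 * j + 3 := by
  simp only [idxFin, mem_biUnion, mem_image, mem_range, Prod.mk.injEq]
  constructor
  · rintro ⟨j', hj', i', hi', rfl, rfl⟩; exact ⟨hj', hi'⟩
  · rintro ⟨hj, hi⟩; exact ⟨j, hj, i, hi, rfl, rfl⟩

def fwd (n : ℕ) : ℕ × ℕ × ℕ → ℕ × ℕ :=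
  fun t =>
    if (t.1 + t.2.1 - (6*n+5)) % 2 = 0 then
      (n - (t.1 + t.2.1 - (6*n+5)) / 2,
       t.2.1 - (3*n+3+(t.1 + t.2.1 - (6*n+5)) / 2))
    else
      (n - (t.1 + t.2.1 - (6*n+5)) / 2,
       3*(n - (t.1 + t.2.1 - (6*n+5)) / 2) + 2
         + (t.2.1 - (3*n+3+(t.1 + t.2.1 - (6*n+5)) / 2)))

def bwd (n : ℕ) : ℕ × ℕ → ℕ × ℕ × ℕ :=
  fun x =>
    if x.2 < 3*x.1+2 then
      (3*n+2+(n-x.1)-x.2, 3*n+3+(n-x.1)+x.2, 6*n+4-2*(n-x.1))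
    else
      (3*n+3+(n-x.1)-(x.2-(3*x.1+2)), 3*n+3+(n-x.1)+(x.2-(3*x.1+2)), 6*n+3-2*(n-x.1))

lemma card_triFin (n : ℕ) : (triFin n).card = (idxFin n).card := by
  apply Finset.card_bij' (fun t _ => fwd n t) (fun x _ => bwd n x)
  · rintro ⟨a, b, c⟩ ht
    rw [mem_triFin] at ht
    simp only [fwd]
    try dsimp only
    split_ifs <;> rw [mem_idxFin] <;> omega
  · rintro ⟨j, i⟩ hx
    rw [mem_idxFin] at hx
    simp only [bwd]
    try dsimp only
    split_ifs <;> rw [mem_triFin] <;> omega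
  · rintro ⟨a, b, c⟩ ht
    rw [mem_triFin] at ht
    by_cases hQ : (a + b - (6*n+5)) % 2 = 0
    · simp only [fwd, bwd]
      try dsimp only
      rw [if_pos hQ]
      try dsimp only
      split_ifs <;> simp only [Prod.mk.injEq] <;>
        exact ⟨by omega, by omega, by omega⟩
    · simp only [fwd, bwd]
      try dsimp only
      rw [if_neg hQ]
      try dsimp only
      split_ifs <;> simp only [Prod.mk.injEq] <;>
        exact ⟨by omega, by omega, by omega⟩
  · rintro ⟨j, i⟩ hx
    rw [mem_idxFin] at hx
    by_cases hP : i < 3*j+2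
    · simp only [bwd, fwd]
      try dsimp only
      rw [if_pos hP]
      try dsimp only
      split_ifs <;> simp only [Prod.mk.injEq] <;> exact ⟨by omega, by omega⟩
    · simp only [bwd, fwd]
      try dsimp only
      rw [if_neg hP]
      try dsimp only
      split_ifs <;> simp only [Prod.mk.injEq] <;> exact ⟨by omega, by omega⟩

lemma card_idxFin (n : ℕ) : (idxFin n).card = 3 * n ^ 2 + 6 * n + 3 := by
  rw [idxFin, Finset.card_biUnion]
  · have h : ∀ j : ℕ, ((range (6*j+3)).image (fun i => (j, i))).card = 6*j+3 := by
      intro j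
      rw [Finset.card_image_of_injective _ (fun a b h => by simpa using h)]
      simp
    simp only [h]
    induction n with
    | zero => simp
    | succ k ih =>
      rw [Finset.sum_range_succ, ih]
      ring
  · intro x _ y _ hxy
    simp only [Finset.disjoint_left, mem_image, mem_range]
    rintro ⟨a, b⟩ ⟨i, _, hi⟩ ⟨i', _, hi'⟩
    apply hxy
    rw [Prod.mk.injEq] at hi hi'
    omega

theorem integer_triangles_perimeter_12n_plus_9 (n : ℕ) :
    T (12 * n + 9) = 3 * n ^ 2 + 6 * n + 3 := by
  rw [T_eq_card, card_triFin, card_idxFin]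
end

section
/- For every nonnegative integer n, the number of integer triangles with perimeter p = 12n + 10 is T(12n+10) = 3n² + 5n + 2. -/
open Finset

def triangleLatticePoints (m : ℕ) : Finset (ℕ × ℕ) :=
  (range (m + 1) ×ˢ range (m + 1)).filter fun x => 3 * x.1 + 2 * x.2 ≤ m

theorem T_two_mul_add_six_eq_card_triangleLatticePoints (m : ℕ) :
    T (2 * m + 6) = #(triangleLatticePoints m) := by
  rw [T, ← Nat.card_eq_finsetCard]
  refine Nat.card_congr
    { toFun := fun t => ⟨(m + 2 - t.1.2.2, t.1.2.2 - t.1.2.1), ?_⟩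
      invFun := fun x => ⟨(2 * x.1.1 + x.1.2 + 2, m + 2 - x.1.1 - x.1.2, m + 2 - x.1.1), ?_⟩
      left_inv := ?_
      right_inv := ?_ }
  · obtain ⟨⟨a, b, c⟩, h⟩ := t
    simp only [triangleLatticePoints, mem_filter, mem_product, mem_range] at h ⊢
    omega
  · obtain ⟨⟨z, d⟩, h⟩ := x
    simp only [triangleLatticePoints, mem_filter, mem_product, mem_range] at h ⊢
    omega
  · rintro ⟨⟨a, b, c⟩, h⟩
    dsimp only at h
    simp only [Subtype.mk.injEq, Prod.mk.injEq]
    omega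
  · rintro ⟨⟨z, d⟩, h⟩
    simp only [triangleLatticePoints, mem_filter, mem_product, mem_range] at h
    simp only [Subtype.mk.injEq, Prod.mk.injEq]
    omega

theorem card_triangleLatticePoints_six_mul_add_two (n : ℕ) :
    #(triangleLatticePoints (6 * n + 2)) = (n + 1) * (3 * n + 2) := by
  set R := range (n + 1) ×ˢ range (3 * n + 2)
  have below : (triangleLatticePoints (6 * n + 2)).filter (fun x => x.1 ≤ n) =
      R.filter (fun x => 3 * x.1 + 2 * x.2 ≤ 6 * n + 2) := by
    ext ⟨z, d⟩
    simp only [R, triangleLatticePoints, mem_filter, mem_product, mem_range]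
    omega
  have above : #((triangleLatticePoints (6 * n + 2)).filter (fun x => ¬ x.1 ≤ n)) =
      #(R.filter (fun x => ¬ 3 * x.1 + 2 * x.2 ≤ 6 * n + 2)) := by
    refine card_nbij' (fun x => (2 * n + 1 - x.1, 3 * n + 1 - x.2))
      (fun x => (2 * n + 1 - x.1, 3 * n + 1 - x.2)) ?_ ?_ ?_ ?_ <;>
    · rintro ⟨z, d⟩ h
      simp only [R, triangleLatticePoints, mem_coe, mem_filter, mem_product, mem_range,
        Prod.mk.injEq] at h ⊢
      omega
  rw [← card_filter_add_card_filter_not (fun x : ℕ × ℕ => x.1 ≤ n), below, above,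
    card_filter_add_card_filter_not, card_product, card_range, card_range]

theorem integer_triangles_perimeter_12n_plus_10 (n : ℕ) :
    T (12 * n + 10) = 3 * n ^ 2 + 5 * n + 2 := by
  rw [show 12 * n + 10 = 2 * (6 * n + 2) + 6 by ring,
    T_two_mul_add_six_eq_card_triangleLatticePoints, card_triangleLatticePoints_six_mul_add_two]
  ring
end

section
/- For every nonnegative integer n, the number of integer triangles with perimeter p = 12n + 11 is T(12n+11) = 3n² + 7n + 4. -/
theorem integer_triangles_perimeter_12n_plus_11 (n : ℕ) :
    T (12 * n + 11) = 3 * n ^ 2 + 7 * n + 4 := by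
  set p := 12 * n + 11 with hp
  set D : Finset ((_ : ℕ) × ℕ) :=
    (Finset.Icc (4*n+4) (6*n+5)).sigma (fun c => Finset.Icc ((p - c + 1)/2) c) with hD
  have e : {t : ℕ × ℕ × ℕ //
      0 < t.1 ∧ t.1 ≤ t.2.1 ∧ t.2.1 ≤ t.2.2 ∧ t.2.2 < t.1 + t.2.1 ∧ t.1 + t.2.1 + t.2.2 = p}
      ≃ {x // x ∈ D} :=
    { toFun := fun t => ⟨⟨t.1.2.2, t.1.2.1⟩, by
        obtain ⟨⟨a, b, c⟩, h⟩ := t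
        simp only [hD, Finset.mem_sigma, Finset.mem_Icc]
        dsimp only at h ⊢
        omega⟩
      invFun := fun x => ⟨(p - x.1.2 - x.1.1, x.1.2, x.1.1), by
        obtain ⟨⟨c, b⟩, h⟩ := x
        simp only [hD, Finset.mem_sigma, Finset.mem_Icc] at h
        dsimp only
        omega⟩
      left_inv := fun t => by
        obtain ⟨⟨a, b, c⟩, h⟩ := t
        dsimp only at h
        simp only [Subtype.mk.injEq, Prod.mk.injEq]
        exact ⟨by omega, trivial⟩
      right_inv := fun x => rfl }
  have h1 : T p = D.card := by
    rw [T, Nat.card_congr e, Nat.card_eq_finsetCard]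
  rw [h1, hD, Finset.card_sigma]
  have h2 : ∀ c ∈ Finset.Icc (4*n+4) (6*n+5),
      (Finset.Icc ((p - c + 1)/2) c).card = c + 1 - (p - c + 1)/2 := by
    intro c _; rw [Nat.card_Icc]
  rw [Finset.sum_congr rfl h2, ← Finset.Ico_add_one_right_eq_Icc, Finset.sum_Ico_eq_sum_range]
  have hrange : 6*n+5 + 1 - (4*n+4) = 2*n+2 := by omega
  rw [hrange]
  have h4 : ∀ j ∈ Finset.range (2*n+2),
      (4*n+4 + j) + 1 - (p - (4*n+4 + j) + 1)/2 = j + 1 + (j+1)/2 := by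
    intro j hj
    simp only [Finset.mem_range] at hj
    omega
  rw [Finset.sum_congr rfl h4]
  have h3 : ∀ m : ℕ, ∑ j ∈ Finset.range (2*m+2), (j + 1 + (j+1)/2) = 3*m^2 + 7*m + 4 := by
    intro m
    induction m with
    | zero => decide
    | succ k ih =>
      have hm : 2*(k+1)+2 = (2*k+2) + 1 + 1 := by ring
      rw [hm, Finset.sum_range_succ, Finset.sum_range_succ, ih]
      have d1 : (2*k+2+1)/2 = k+1 := by omega
      have d2 : (2*k+2+1+1)/2 = k+2 := by omega
      rw [d1, d2]; ring
  exact h3 n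
end

section
/- Let p be an integer with p ≥ 7 and p ≡ 1 (mod 3), say p = 3n + 1. Then the maximum of the Heron area √(τ(τ−a)(τ−b)(τ−c)), with τ = p/2, over all triples of positive integers (a,b,c) with a+b+c = p satisfying the strict triangle inequality, equals ((p+2)/12)·√((p−4)/3)·√p, and it is attained by the triple (n+1, n, n). Likewise, if p ≥ 5 and p ≡ 2 (mod 3), say p = 3n + 2, then this maximum equals ((p−2)/12)·√((p+4)/3)·√p, and it is attained by the triple (n+1, n+1, n). -/
/-- The set of Heron areas of integer triangles with perimeter `p`. -/
def triangleAreas (p : ℕ) : Set ℝ :=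
  {E : ℝ | ∃ a b c : ℕ, 0 < a ∧ 0 < b ∧ 0 < c ∧ a + b + c = p ∧
    a < b + c ∧ b < a + c ∧ c < a + b ∧
    E = Real.sqrt (((p : ℝ) / 2) * ((p : ℝ) / 2 - a) * ((p : ℝ) / 2 - b) * ((p : ℝ) / 2 - c))}

/-- Smoothing induction: product bound for sorted same-parity triples. -/
lemma prod_le_aux (p K : ℕ)
    (hbase : ∀ u v w : ℕ, 0 < u → u ≤ v → v ≤ w → u % 2 = v % 2 → v % 2 = w % 2 →
      u + v + w = p → w - u ≤ 3 → u * v * w ≤ K) :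
    ∀ d u v w : ℕ, w - u ≤ d → 0 < u → u ≤ v → v ≤ w → u % 2 = v % 2 → v % 2 = w % 2 →
      u + v + w = p → u * v * w ≤ K := by
  intro d
  induction d with
  | zero => intro u v w hd h1 h2 h3 h4 h5 h6; exact hbase u v w h1 h2 h3 h4 h5 h6 (by omega)
  | succ d ih =>
    intro u v w hd h1 h2 h3 h4 h5 h6
    by_cases hs : w - u ≤ 3
    · exact hbase u v w h1 h2 h3 h4 h5 h6 hs
    · have hw4 : u + 4 ≤ w := by omega
      obtain ⟨w2, rfl⟩ : ∃ k, w = k + 2 := ⟨w - 2, by omega⟩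
      by_cases hv : v ≤ u + 1
      · have hvu : v = u := by omega
        subst hvu
        have h' := ih v (v + 2) w2 (by omega) h1 (by omega) (by omega) (by omega) (by omega)
          (by omega)
        nlinarith
      · by_cases hvw : v ≤ w2
        · have h' := ih (u + 2) v w2 (by omega) (by omega) (by omega) hvw (by omega) (by omega)
            (by omega)
          nlinarith
        · have hvw' : v = w2 + 2 := by omega
          subst hvw'
          have h' := ih (u + 2) w2 (w2 + 2) (by omega) (by omega) (by omega) (by omega)
            (by omega) (by omega) (by omega)
          nlinarith

/-- Unsorted version. -/
lemma prod_le (p K : ℕ)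
    (hbase : ∀ u v w : ℕ, 0 < u → u ≤ v → v ≤ w → u % 2 = v % 2 → v % 2 = w % 2 →
      u + v + w = p → w - u ≤ 3 → u * v * w ≤ K) :
    ∀ u v w : ℕ, 0 < u → 0 < v → 0 < w → u % 2 = v % 2 → v % 2 = w % 2 →
      u + v + w = p → u * v * w ≤ K := by
  intro u v w hu hv hw hp1 hp2 hs
  rcases le_total u v with h1 | h1 <;> rcases le_total v w with h2 | h2 <;>
    rcases le_total u w with h3 | h3
  · have := prod_le_aux p K hbase p u v w (by omega) hu h1 h2 (by omega) (by omega) (by omega)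
    nlinarith
  · have := prod_le_aux p K hbase p u v w (by omega) hu h1 h2 (by omega) (by omega) (by omega)
    nlinarith
  · have := prod_le_aux p K hbase p u w v (by omega) hu h3 h2 (by omega) (by omega) (by omega)
    nlinarith
  · have := prod_le_aux p K hbase p w u v (by omega) hw h3 h1 (by omega) (by omega) (by omega)
    nlinarith
  · have := prod_le_aux p K hbase p v u w (by omega) hv h1 h3 (by omega) (by omega) (by omega)
    nlinarith
  · have := prod_le_aux p K hbase p v w u (by omega) hv h2 h3 (by omega) (by omega) (by omega)
    nlinarith
  · have := prod_le_aux p K hbase p w v u (by omega) hw h2 h1 (by omega) (by omega) (by omega)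
    nlinarith
  · have := prod_le_aux p K hbase p w v u (by omega) hw h2 h1 (by omega) (by omega) (by omega)
    nlinarith

lemma key1 (n : ℕ) (hn : 2 ≤ n) :
    ∀ u v w : ℕ, 0 < u → 0 < v → 0 < w → u % 2 = v % 2 → v % 2 = w % 2 →
      u + v + w = 3 * n + 1 → u * v * w ≤ (n - 1) * ((n + 1) * (n + 1)) := by
  apply prod_le
  intro u v w h1 h2 h3 h4 h5 h6 h7
  have : u = n - 1 ∧ v = n + 1 ∧ w = n + 1 := by omega
  obtain ⟨rfl, rfl, rfl⟩ := this
  exact Nat.le_of_eq (mul_assoc _ _ _)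

lemma key2 (n : ℕ) (hn : 1 ≤ n) :
    ∀ u v w : ℕ, 0 < u → 0 < v → 0 < w → u % 2 = v % 2 → v % 2 = w % 2 →
      u + v + w = 3 * n + 2 → u * v * w ≤ n * (n * (n + 2)) := by
  apply prod_le
  intro u v w h1 h2 h3 h4 h5 h6 h7
  have : u = n ∧ v = n ∧ w = n + 2 := by omega
  obtain ⟨rfl, rfl, rfl⟩ := this
  exact Nat.le_of_eq (mul_assoc _ _ _)

lemma sqrt_eq1 (x : ℝ) (hx : 1 ≤ x) :
    Real.sqrt ((3*x+1)/2 * ((3*x+1)/2 - (x+1)) * ((3*x+1)/2 - x) * ((3*x+1)/2 - x))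
      = ((3*x+1) + 2) / 12 * Real.sqrt (((3*x+1) - 4)/3) * Real.sqrt (3*x+1) := by
  have h1 : (3*x+1)/2 * ((3*x+1)/2 - (x+1)) * ((3*x+1)/2 - x) * ((3*x+1)/2 - x)
      = ((((3*x+1)+2)/12)^2 * (((3*x+1)-4)/3)) * (3*x+1) := by ring
  rw [h1, Real.sqrt_mul (mul_nonneg (by positivity) (by linarith)),
    Real.sqrt_mul (by positivity) , Real.sqrt_sq (by nlinarith)]

lemma sqrt_eq2 (x : ℝ) (hx : 0 ≤ x) :
    Real.sqrt ((3*x+2)/2 * ((3*x+2)/2 - (x+1)) * ((3*x+2)/2 - (x+1)) * ((3*x+2)/2 - x))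
      = ((3*x+2) - 2) / 12 * Real.sqrt (((3*x+2) + 4)/3) * Real.sqrt (3*x+2) := by
  have h1 : (3*x+2)/2 * ((3*x+2)/2 - (x+1)) * ((3*x+2)/2 - (x+1)) * ((3*x+2)/2 - x)
      = ((((3*x+2)-2)/12)^2 * (((3*x+2)+4)/3)) * (3*x+2) := by ring
  rw [h1, Real.sqrt_mul (mul_nonneg (by positivity) (by linarith)),
    Real.sqrt_mul (by positivity), Real.sqrt_sq (by nlinarith)]


lemma ub_gen (p K : ℕ)
    (hkey : ∀ u v w : ℕ, 0 < u → 0 < v → 0 < w → u % 2 = v % 2 → v % 2 = w % 2 →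
      u + v + w = p → u * v * w ≤ K)
    (M : ℝ) (hM0 : 0 ≤ M) (hM2 : M ^ 2 = (p : ℝ) * K / 16) :
    ∀ E ∈ triangleAreas p, E ≤ M := by
  rintro E ⟨a, b, c, ha, hb, hc, hsum, t1, t2, t3, rfl⟩
  have h2a : 2 * a < p := by omega
  have h2b : 2 * b < p := by omega
  have h2c : 2 * c < p := by omega
  have hK := hkey (p - 2*a) (p - 2*b) (p - 2*c) (by omega) (by omega) (by omega)
    (by omega) (by omega) (by omega)
  have hcast : (((p - 2*a) * (p - 2*b) * (p - 2*c) : ℕ) : ℝ)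
      = ((p:ℝ) - 2*a) * ((p:ℝ) - 2*b) * ((p:ℝ) - 2*c) := by
    push_cast [Nat.cast_sub h2a.le, Nat.cast_sub h2b.le, Nat.cast_sub h2c.le]
    ring
  have hKR : ((p:ℝ) - 2*a) * ((p:ℝ) - 2*b) * ((p:ℝ) - 2*c) ≤ (K : ℝ) := by
    rw [← hcast]; exact_mod_cast hK
  have hX : ((p : ℝ) / 2) * ((p : ℝ) / 2 - a) * ((p : ℝ) / 2 - b) * ((p : ℝ) / 2 - c)
      ≤ M ^ 2 := by
    rw [hM2]
    have hp0 : (0:ℝ) ≤ (p:ℝ) := by positivity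
    nlinarith [hKR, hp0]
  calc Real.sqrt (((p : ℝ) / 2) * ((p : ℝ) / 2 - a) * ((p : ℝ) / 2 - b) * ((p : ℝ) / 2 - c))
      ≤ Real.sqrt (M ^ 2) := Real.sqrt_le_sqrt hX
    _ = M := Real.sqrt_sq hM0

theorem max_area_perimeter_not_multiple_of_three :
    (∀ p n : ℕ, 7 ≤ p → p = 3 * n + 1 →
      IsGreatest (triangleAreas p)
        (((p : ℝ) + 2) / 12 * Real.sqrt (((p : ℝ) - 4) / 3) * Real.sqrt p) ∧
      Real.sqrt (((p : ℝ) / 2) * ((p : ℝ) / 2 - ((n : ℝ) + 1)) *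
          ((p : ℝ) / 2 - (n : ℝ)) * ((p : ℝ) / 2 - (n : ℝ))) =
        ((p : ℝ) + 2) / 12 * Real.sqrt (((p : ℝ) - 4) / 3) * Real.sqrt p) ∧
    (∀ p n : ℕ, 5 ≤ p → p = 3 * n + 2 →
      IsGreatest (triangleAreas p)
        (((p : ℝ) - 2) / 12 * Real.sqrt (((p : ℝ) + 4) / 3) * Real.sqrt p) ∧
      Real.sqrt (((p : ℝ) / 2) * ((p : ℝ) / 2 - ((n : ℝ) + 1)) *
          ((p : ℝ) / 2 - ((n : ℝ) + 1)) * ((p : ℝ) / 2 - (n : ℝ))) =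
        ((p : ℝ) - 2) / 12 * Real.sqrt (((p : ℝ) + 4) / 3) * Real.sqrt p) := by
  constructor
  · intro p n hp hpn
    have hn : 2 ≤ n := by omega
    have hpR : (p : ℝ) = 3 * (n : ℝ) + 1 := by subst hpn; push_cast; ring
    have hnR : (1 : ℝ) ≤ (n : ℝ) := by exact_mod_cast (by omega : 1 ≤ n)
    have hsq : Real.sqrt (((p : ℝ) / 2) * ((p : ℝ) / 2 - ((n : ℝ) + 1)) *
          ((p : ℝ) / 2 - (n : ℝ)) * ((p : ℝ) / 2 - (n : ℝ))) =
        ((p : ℝ) + 2) / 12 * Real.sqrt (((p : ℝ) - 4) / 3) * Real.sqrt p := by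
      rw [hpR]; exact sqrt_eq1 n hnR
    have hK : (((n - 1) * ((n + 1) * (n + 1)) : ℕ) : ℝ)
        = ((n : ℝ) - 1) * (((n : ℝ) + 1) * ((n : ℝ) + 1)) := by
      push_cast [Nat.cast_sub (show 1 ≤ n by omega)]; ring
    have hM0 : 0 ≤ ((p : ℝ) + 2) / 12 * Real.sqrt (((p : ℝ) - 4) / 3) * Real.sqrt p := by
      positivity
    have hM2 : (((p : ℝ) + 2) / 12 * Real.sqrt (((p : ℝ) - 4) / 3) * Real.sqrt p) ^ 2
        = (p : ℝ) * (((n - 1) * ((n + 1) * (n + 1)) : ℕ) : ℝ) / 16 := by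
      have e1 : (((p : ℝ) + 2) / 12 * Real.sqrt (((p : ℝ) - 4) / 3) * Real.sqrt p) ^ 2
          = (((p : ℝ) + 2) / 12) ^ 2 * Real.sqrt (((p : ℝ) - 4) / 3) ^ 2
            * Real.sqrt (p : ℝ) ^ 2 := by ring
      rw [e1, Real.sq_sqrt (by rw [hpR]; linarith), Real.sq_sqrt (by positivity), hK, hpR]
      ring
    refine ⟨⟨⟨n + 1, n, n, by omega, by omega, by omega, by omega, by omega, by omega,
      by omega, by push_cast; exact hsq.symm⟩, ?_⟩, hsq⟩
    intro E hE
    exact ub_gen p ((n - 1) * ((n + 1) * (n + 1))) (fun u v w h1 h2 h3 h4 h5 h6 => key1 n hn u v w h1 h2 h3 h4 h5 (by omega)) _ hM0 hM2 E hE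
  · intro p n hp hpn
    have hn : 1 ≤ n := by omega
    have hpR : (p : ℝ) = 3 * (n : ℝ) + 2 := by subst hpn; push_cast; ring
    have hnR : (0 : ℝ) ≤ (n : ℝ) := by positivity
    have hsq : Real.sqrt (((p : ℝ) / 2) * ((p : ℝ) / 2 - ((n : ℝ) + 1)) *
          ((p : ℝ) / 2 - ((n : ℝ) + 1)) * ((p : ℝ) / 2 - (n : ℝ))) =
        ((p : ℝ) - 2) / 12 * Real.sqrt (((p : ℝ) + 4) / 3) * Real.sqrt p := by
      rw [hpR]; exact sqrt_eq2 n hnR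
    have hK : ((n * (n * (n + 2)) : ℕ) : ℝ) = (n : ℝ) * ((n : ℝ) * ((n : ℝ) + 2)) := by
      push_cast; ring
    have hM0 : 0 ≤ ((p : ℝ) - 2) / 12 * Real.sqrt (((p : ℝ) + 4) / 3) * Real.sqrt p := by
      have : (0:ℝ) ≤ ((p : ℝ) - 2) / 12 := by rw [hpR]; linarith
      positivity
    have hM2 : (((p : ℝ) - 2) / 12 * Real.sqrt (((p : ℝ) + 4) / 3) * Real.sqrt p) ^ 2
        = (p : ℝ) * ((n * (n * (n + 2)) : ℕ) : ℝ) / 16 := by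
      have e1 : (((p : ℝ) - 2) / 12 * Real.sqrt (((p : ℝ) + 4) / 3) * Real.sqrt p) ^ 2
          = (((p : ℝ) - 2) / 12) ^ 2 * Real.sqrt (((p : ℝ) + 4) / 3) ^ 2
            * Real.sqrt (p : ℝ) ^ 2 := by ring
      rw [e1, Real.sq_sqrt (by positivity), Real.sq_sqrt (by positivity), hK, hpR]
      ring
    refine ⟨⟨⟨n + 1, n + 1, n, by omega, by omega, by omega, by omega, by omega, by omega,
      by omega, by push_cast; exact hsq.symm⟩, ?_⟩, hsq⟩
    intro E hE
    exact ub_gen p (n * (n * (n + 2))) (fun u v w h1 h2 h3 h4 h5 h6 => key2 n hn u v w h1 h2 h3 h4 h5 (by omega)) _ hM0 hM2 E hE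
end
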